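/- arXiv:2202.04556 — 3 statements merged into one kernel-verified Lean document; each statement's English description precedes it below -/
import Mathlib

section
/- If p, q, r are integers with p, q, r ≥ 2 and 1/p + 1/q + 1/r < 1 (equivalently q*r + r*p + p*q < p*q*r), then the trace of the monodromy matrix A_{p,q,r} is at least 3; in particular A_{p,q,r} is a hyperbolic element of SL(2, ℤ), so the link of the cusp singularity T_{p,q,r} is a torus bundle over the circle with hyperbolic monodromy. -/
/-- The monodromy matrix of the torus-bundle link of the `T_{p,q,r}`
hypersurface singularity. -/
def monodromy (p q r : ℤ) : Matrix (Fin 2) (Fin 2) ℤ :=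
  !![r - 1, -1; 1, 0] * !![q - 1, -1; 1, 0] * !![p - 1, -1; 1, 0]

/-- If `p, q, r ≥ 2` and `1/p + 1/q + 1/r < 1` (equivalently
`q*r + r*p + p*q < p*q*r`), then the trace of `A_{p,q,r}` is at least `3`;
in particular `|trace| > 2`, so `A_{p,q,r}` is hyperbolic. -/
theorem monodromy_trace_ge_three_of_cusp (p q r : ℤ)
    (hp : 2 ≤ p) (hq : 2 ≤ q) (hr : 2 ≤ r)
    (h : q * r + r * p + p * q < p * q * r) :
    3 ≤ (monodromy p q r).trace ∧ 2 < |(monodromy p q r).trace| := by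
  have ht : (monodromy p q r).trace = p * q * r - (q * r + r * p + p * q) + 2 := by
    simp [monodromy, Matrix.trace, Matrix.mul_fin_two, Fin.sum_univ_two, Matrix.diag]
    ring
  have h3 : 3 ≤ (monodromy p q r).trace := by rw [ht]; omega
  exact ⟨h3, by rw [abs_of_pos (by omega)]; omega⟩
end

section
/- (Proposition 4.1, case T_{2,3,7}) The monodromy matrix A_{2,3,7} = [[5,-11],[1,-2]] of the link of the cusp singularity T_{2,3,7} is conjugate in SL(2, ℤ) to its own inverse: there exists P in SL(2, ℤ) with P * A_{2,3,7} * P⁻¹ = A_{2,3,7}⁻¹. -/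
/-!
`A_{2,3,7} = p * q` with `p = [[-3, 10], [-1, 3]]` and `q = [[5, -13], [2, -5]]`, both of trace
`0`, hence both squaring to `-1` by Cayley–Hamilton (`g² = (tr g) g - 1` in `SL(2)`). An element that factors as a product of two
elements whose squares are mutually inverse is conjugate to its inverse: conjugation by `p`
turns `p * q` into `q * p = q⁻¹ * p⁻¹`.
-/

/-- The monodromy matrix `A_{2,3,7} = [[5,-11],[1,-2]]` of the link of the
cusp singularity `T_{2,3,7}`, as an element of `SL(2, ℤ)`. -/
def A237 : Matrix.SpecialLinearGroup (Fin 2) ℤ :=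
  ⟨!![5, -11; 1, -2], by norm_num [Matrix.det_fin_two_of]⟩

theorem isConj_mul_inv_of_sq_mul_sq_eq_one {G : Type*} [Group G] {p q : G}
    (h : q ^ 2 * p ^ 2 = 1) : IsConj (p * q) (p * q)⁻¹ := by
  refine isConj_iff.mpr ⟨p⁻¹, ?_⟩
  calc p⁻¹ * (p * q) * p⁻¹⁻¹ = q⁻¹ * (q ^ 2 * p ^ 2) * p⁻¹ := by group
    _ = (p * q)⁻¹ := by rw [h, mul_one, mul_inv_rev]

open scoped MatrixGroups in
theorem Matrix.SpecialLinearGroup.sq_eq_neg_one_of_trace_eq_zero {R : Type*} [CommRing R]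
    (g : SL(2, R)) (h : (g : Matrix (Fin 2) (Fin 2) R).trace = 0) : g ^ 2 = -1 := by
  have htr : g 0 0 + g 1 1 = 0 := by rwa [Matrix.trace_fin_two] at h
  have hdet : g 0 0 * g 1 1 - g 0 1 * g 1 0 = 1 := by rw [← Matrix.det_fin_two, g.det_coe]
  ext i j
  fin_cases i <;> fin_cases j <;>
    simp only [sq, coe_mul, coe_neg, coe_one, mul_apply, Fin.sum_univ_two, neg_apply, one_apply_eq,
      one_apply_ne, ne_eq, zero_ne_one, one_ne_zero, not_false_eq_true, neg_zero, Fin.zero_eta,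
      Fin.mk_one, Fin.isValue]
  · linear_combination g 0 0 * htr - hdet
  · linear_combination g 0 1 * htr
  · linear_combination g 1 0 * htr
  · linear_combination g 1 1 * htr - hdet

/-- (Proposition 4.1, case `T_{2,3,7}`) The monodromy matrix `A_{2,3,7}` is
conjugate in `SL(2, ℤ)` to its own inverse. -/
theorem A237_conj_inv :
    ∃ P : Matrix.SpecialLinearGroup (Fin 2) ℤ, P * A237 * P⁻¹ = A237⁻¹ := by
  let p : Matrix.SpecialLinearGroup (Fin 2) ℤ := ⟨!![-3, 10; -1, 3], by decide⟩
  let q : Matrix.SpecialLinearGroup (Fin 2) ℤ := ⟨!![5, -13; 2, -5], by decide⟩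
  have hA : A237 = p * q := by decide
  have hsq : q ^ 2 * p ^ 2 = 1 := by
    rw [q.sq_eq_neg_one_of_trace_eq_zero (by decide),
      p.sq_eq_neg_one_of_trace_eq_zero (by decide), neg_one_mul, neg_neg]
  rw [hA]
  exact isConj_iff.mp (isConj_mul_inv_of_sq_mul_sq_eq_one hsq)
end

section
/- (Proposition 4.1, case T_{4,4,4}) The monodromy matrix A_{4,4,4} = [[21,-8],[8,-3]] of the link of the cusp singularity T_{4,4,4} is conjugate in SL(2, ℤ) to its own inverse: there exists P in SL(2, ℤ) with P * A_{4,4,4} * P⁻¹ = A_{4,4,4}⁻¹. -/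
/-! `A_{4,4,4} = M³` with `M = [[3,-1],[1,0]]`, so any `P` with `P M = M⁻¹ P` also satisfies
`P M³ = M⁻³ P`. Solving `P M = M⁻¹ P` for `P = [[a,b],[c,d]]` forces `c = 3a + b`, `d = -a`,
and `det P = 1` becomes `a² + 3ab + b² = -1`, which `a = 1`, `b = -1` solves. -/

/-- The monodromy matrix `A_{4,4,4} = [[21,-8],[8,-3]]` of the link of the
cusp singularity `T_{4,4,4}`, as an element of `SL(2, ℤ)`. -/
def A444 : Matrix.SpecialLinearGroup (Fin 2) ℤ :=
  ⟨!![21, -8; 8, -3], by norm_num [Matrix.det_fin_two_of]⟩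

def monodromyFactor (k : ℤ) : Matrix.SpecialLinearGroup (Fin 2) ℤ :=
  ⟨!![k, -1; 1, 0], by simp [Matrix.det_fin_two_of]⟩

theorem coe_monodromyFactor (k : ℤ) :
    (monodromyFactor k : Matrix (Fin 2) (Fin 2) ℤ) = !![k, -1; 1, 0] :=
  rfl

theorem A444_eq_monodromyFactor_pow : A444 = monodromyFactor 3 ^ 3 := by
  ext i j
  rw [Matrix.SpecialLinearGroup.coe_pow, coe_monodromyFactor, pow_three]
  simp [A444]

theorem exists_semiconjBy_monodromyFactor_inv {k a b : ℤ} (h : a ^ 2 + k * a * b + b ^ 2 = -1) :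
    ∃ P, SemiconjBy P (monodromyFactor k) (monodromyFactor k)⁻¹ := by
  let P : Matrix.SpecialLinearGroup (Fin 2) ℤ :=
    ⟨!![a, b; k * a + b, -a], by rw [Matrix.det_fin_two_of]; linear_combination -h⟩
  refine ⟨P, Matrix.SpecialLinearGroup.ext _ _ fun i j => ?_⟩
  rw [Matrix.SpecialLinearGroup.coe_mul, Matrix.SpecialLinearGroup.coe_mul,
    Matrix.SpecialLinearGroup.coe_inv, coe_monodromyFactor, Matrix.adjugate_fin_two_of]
  fin_cases i <;> fin_cases j <;> simp [P] <;> ring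

/-- (Proposition 4.1, case `T_{4,4,4}`) The monodromy matrix `A_{4,4,4}` is
conjugate in `SL(2, ℤ)` to its own inverse. -/
theorem A444_conj_inv :
    ∃ P : Matrix.SpecialLinearGroup (Fin 2) ℤ, P * A444 * P⁻¹ = A444⁻¹ := by
  obtain ⟨P, hP⟩ := exists_semiconjBy_monodromyFactor_inv (k := 3) (a := 1) (b := -1) (by norm_num)
  refine ⟨P, ?_⟩
  rw [mul_inv_eq_iff_eq_mul, A444_eq_monodromyFactor_pow, ← inv_pow]
  exact hP.pow_right 3
end
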